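/- Let (A, ·) be a perm algebra and r ∈ A ⊗ A skew-symmetric (σ(r) = −r). Then r is (R, ad)-invariant if and only if Tᵣ(R*(a)a*) = ad(a)Tᵣ(a*) for all a ∈ A, a* ∈ A*, and this is further equivalent to L*(Tᵣ(a*))b* = ad*(Tᵣ(b*))a* for all a*, b* ∈ A*. -/

import Mathlib

/-!
For skew-symmetric `r` the form `(f, g) ↦ g (Tᵣ f)` on `A*` is antisymmetric. Tensors in `A ⊗ A`
are separated by the pairings `s ↦ g (Tₛ f)` (they are the coordinates with respect to a product
basis), so the invariance of `r` becomes the scalar identity `g (Tᵣ(f)·a) = -f (ad(a) Tᵣ(g))` for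
all `a, f, g`. Each of the two other conditions is this identity again: the first one paired with
`g` and transposed once by skew-symmetry, the second one evaluated at `a`.
-/

open TensorProduct

section
variable {K : Type*} [Field K] {A : Type*} [AddCommGroup A] [Module K A]

/-- perm identity for a plain binary operation -/
def IsPermFn {X : Type*} (mu : X → X → X) : Prop :=
  ∀ a b c : X, mu a (mu b c) = mu (mu a b) c ∧ mu (mu a b) c = mu (mu b a) c

/-- perm algebra: bundled bilinear multiplication satisfying the perm identities -/
def IsPermMul (m : A →ₗ[K] A →ₗ[K] A) : Prop :=
  ∀ a b c : A, m a (m b c) = m (m a b) c ∧ m (m a b) c = m (m b a) c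

/-- The map `T_r : A* → A` associated with a 2-tensor `r ∈ A ⊗ A`,
`T_r(a*) = Σ ⟨a*, a_i⟩ b_i` for `r = Σ a_i ⊗ b_i`. -/
noncomputable def Tten (r : A ⊗[K] A) : Module.Dual K A →ₗ[K] A :=
  TensorProduct.lift (LinearMap.mk₂ K
    (fun a b => (Module.Dual.eval K A a).smulRight b)
    (by intro a a' b; ext f; simp [add_smul])
    (by intro c a b; ext f; simp [mul_smul])
    (by intro a b b'; ext f; simp [smul_add])
    (by intro c a b; ext f; simp [smul_comm c])) r

noncomputable def mulT (m : A →ₗ[K] A →ₗ[K] A) : A ⊗[K] A →ₗ[K] A := TensorProduct.lift m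

noncomputable def p13_23 (m : A →ₗ[K] A →ₗ[K] A) :
    (A ⊗[K] A) ⊗[K] (A ⊗[K] A) →ₗ[K] (A ⊗[K] A) ⊗[K] A :=
  (TensorProduct.map LinearMap.id (mulT m)) ∘ₗ
    (TensorProduct.tensorTensorTensorComm K A A A A).toLinearMap

noncomputable def p12_13 (m : A →ₗ[K] A →ₗ[K] A) :
    (A ⊗[K] A) ⊗[K] (A ⊗[K] A) →ₗ[K] (A ⊗[K] A) ⊗[K] A :=
  (TensorProduct.assoc K A A A).symm.toLinearMap ∘ₗ
    (TensorProduct.map (mulT m) LinearMap.id) ∘ₗ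
    (TensorProduct.tensorTensorTensorComm K A A A A).toLinearMap

noncomputable def p13_12 (m : A →ₗ[K] A →ₗ[K] A) :
    (A ⊗[K] A) ⊗[K] (A ⊗[K] A) →ₗ[K] (A ⊗[K] A) ⊗[K] A :=
  (TensorProduct.assoc K A A A).symm.toLinearMap ∘ₗ
    (TensorProduct.map (mulT m) (TensorProduct.comm K A A).toLinearMap) ∘ₗ
    (TensorProduct.tensorTensorTensorComm K A A A A).toLinearMap

noncomputable def p12_23 (m : A →ₗ[K] A →ₗ[K] A) :
    (A ⊗[K] A) ⊗[K] (A ⊗[K] A) →ₗ[K] (A ⊗[K] A) ⊗[K] A :=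
  (TensorProduct.assoc K A A A).symm.toLinearMap ∘ₗ
    (TensorProduct.leftComm K A A A).toLinearMap ∘ₗ
    (TensorProduct.map (mulT m) LinearMap.id) ∘ₗ
    (TensorProduct.tensorTensorTensorComm K A A A A).toLinearMap ∘ₗ
    (TensorProduct.map (TensorProduct.comm K A A).toLinearMap LinearMap.id)

/-- `[[r,r]] = r₁₂·r₂₃ − r₁₃·r₂₃ + r₁₂·r₁₃ − r₁₃·r₁₂` -/
noncomputable def ybrac (m : A →ₗ[K] A →ₗ[K] A) (r : A ⊗[K] A) : (A ⊗[K] A) ⊗[K] A :=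
  p12_23 m (r ⊗ₜ r) - p13_23 m (r ⊗ₜ r) + p12_13 m (r ⊗ₜ r) - p13_12 m (r ⊗ₜ r)

/-- the perm Yang-Baxter equation -/
noncomputable def IsPYBESol (m : A →ₗ[K] A →ₗ[K] A) (r : A ⊗[K] A) : Prop := ybrac m r = 0

/-- `(id ⊗ R(a) − ad(a) ⊗ id)(s) = 0` for all `a`. -/
def RadInv (m : A →ₗ[K] A →ₗ[K] A) (s : A ⊗[K] A) : Prop :=
  ∀ a : A, TensorProduct.map LinearMap.id (m.flip a) s
    = TensorProduct.map (m a - m.flip a) LinearMap.id s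

variable {V : Type*} [AddCommGroup V] [Module K V]

/-- representation of a perm algebra -/
def IsPermRep (m : A →ₗ[K] A →ₗ[K] A) (l rr : A →ₗ[K] V →ₗ[K] V) : Prop :=
  ∀ a b : A, l (m a b) = l a ∘ₗ l b ∧ l a ∘ₗ l b = l b ∘ₗ l a ∧
    rr (m a b) = rr b ∘ₗ rr a ∧ rr b ∘ₗ rr a = rr b ∘ₗ l a ∧ rr b ∘ₗ l a = l a ∘ₗ rr b

/-- A-perm algebra -/
def IsAPermAlg (m : A →ₗ[K] A →ₗ[K] A) (l rr : A →ₗ[K] V →ₗ[K] V)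
    (mV : V →ₗ[K] V →ₗ[K] V) : Prop :=
  IsPermRep m l rr ∧ IsPermMul mV ∧
  (∀ (a : A) (u w : V), rr a (mV u w) = rr a (mV w u) ∧ rr a (mV u w) = mV u (rr a w)) ∧
  (∀ (a : A) (u w : V), mV (l a u) w = mV (rr a u) w ∧ mV (l a u) w = l a (mV u w) ∧
    l a (mV u w) = mV u (l a w))



lemma Module.eq_iff_forall_dual_apply_eq {R M : Type*} [CommRing R] [AddCommGroup M] [Module R M]
    [Module.Projective R M] {x y : M} : x = y ↔ ∀ g : Module.Dual R M, g x = g y := by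
  simp [← sub_eq_zero (a := x), ← Module.forall_dual_apply_eq_zero_iff R (x - y), sub_eq_zero]

@[simp]
lemma Tten_tmul (a b : A) (f : Module.Dual K A) : Tten (a ⊗ₜ[K] b) f = f a • b := by
  simp [Tten]

lemma Tten_map (φ ψ : A →ₗ[K] A) (s : A ⊗[K] A) (f : Module.Dual K A) :
    Tten (TensorProduct.map φ ψ s) f = ψ (Tten s (φ.dualMap f)) := by
  induction s using TensorProduct.induction_on with
  | zero => simp [Tten]
  | tmul a b => simp
  | add x y hx hy => simp_all [Tten]

lemma Tten_comm_apply (s : A ⊗[K] A) (f g : Module.Dual K A) :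
    g (Tten (TensorProduct.comm K A A s) f) = f (Tten s g) := by
  induction s using TensorProduct.induction_on with
  | zero => simp [Tten]
  | tmul a b => simp [mul_comm]
  | add x y hx hy => simp_all [Tten]

lemma Tten_apply_of_comm_eq_neg {r : A ⊗[K] A} (hskew : TensorProduct.comm K A A r = -r)
    (f g : Module.Dual K A) : g (Tten r f) = -f (Tten r g) := by
  rw [eq_neg_iff_add_eq_zero, ← Tten_comm_apply r f g, hskew]
  simp [Tten]

lemma Module.Basis.tensorProduct_repr_eq_Tten {ι : Type*} (b : Module.Basis ι K A)
    (s : A ⊗[K] A) (i j : ι) :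
    (b.tensorProduct b).repr s (i, j) = b.coord j (Tten s (b.coord i)) := by
  induction s using TensorProduct.induction_on with
  | zero => simp [Tten]
  | tmul a b' => simp [Basis.tensorProduct_repr_tmul_apply, mul_comm]
  | add x y hx hy => simp_all [Tten]

lemma Tten_injective : Function.Injective (Tten : A ⊗[K] A → Module.Dual K A →ₗ[K] A) := by
  intro s t hst
  let b := Module.Free.chooseBasis K A
  refine (b.tensorProduct b).repr.injective (Finsupp.ext fun ⟨i, j⟩ => ?_)
  rw [b.tensorProduct_repr_eq_Tten, b.tensorProduct_repr_eq_Tten, hst]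

lemma tensor_eq_iff_forall_apply_Tten {s t : A ⊗[K] A} :
    s = t ↔ ∀ f g : Module.Dual K A, g (Tten s f) = g (Tten t f) := by
  simp only [← Module.eq_iff_forall_dual_apply_eq, ← LinearMap.ext_iff, Tten_injective.eq_iff]

theorem radInv_iff_forall_apply_Tten (m : A →ₗ[K] A →ₗ[K] A) {r : A ⊗[K] A}
    (hskew : TensorProduct.comm K A A r = -r) :
    RadInv m r ↔
      ∀ (a : A) (f g : Module.Dual K A),
        g (m.flip a (Tten r f)) = -f ((m a - m.flip a) (Tten r g)) := by
  simp only [RadInv, tensor_eq_iff_forall_apply_Tten, Tten_map, LinearMap.dualMap_id,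
    LinearMap.id_apply]
  refine forall₃_congr fun a f g => ?_
  rw [Tten_apply_of_comm_eq_neg hskew, LinearMap.dualMap_apply]

theorem stmt8_general (m : A →ₗ[K] A →ₗ[K] A)
    (r : A ⊗[K] A) (hskew : (TensorProduct.comm K A A) r = -r) :
    (RadInv m r ↔
      ∀ (a : A) (f : Module.Dual K A),
        Tten r ((m.flip a).dualMap f) = (m a - m.flip a) (Tten r f)) ∧
    (RadInv m r ↔
      ∀ f g : Module.Dual K A,
        (m (Tten r f)).dualMap g
          = (m (Tten r g) - m.flip (Tten r g)).dualMap f) := by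
  rw [radInv_iff_forall_apply_Tten m hskew]
  have transpose_eq_iff (a : A) (f g : Module.Dual K A) :
      g (Tten r ((m.flip a).dualMap f)) = g ((m a - m.flip a) (Tten r f)) ↔
        f (m.flip a (Tten r g)) = -g ((m a - m.flip a) (Tten r f)) := by
    rw [Tten_apply_of_comm_eq_neg hskew, LinearMap.dualMap_apply, neg_eq_iff_eq_neg]
  constructor
  · exact ⟨fun h a f => Module.eq_iff_forall_dual_apply_eq.2 fun g =>
        (transpose_eq_iff a f g).2 (h a g f),
      fun h a f g => (transpose_eq_iff a g f).1 (Module.eq_iff_forall_dual_apply_eq.1 (h a g) f)⟩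
  · simp only [LinearMap.ext_iff, LinearMap.dualMap_apply, LinearMap.sub_apply,
      LinearMap.flip_apply, map_sub, neg_sub]
    exact ⟨fun h f g a => h a f g, fun h a f g => h f g a⟩

theorem stmt8 [FiniteDimensional K A] (m : A →ₗ[K] A →ₗ[K] A) (hm : IsPermMul m)
    (r : A ⊗[K] A) (hskew : (TensorProduct.comm K A A) r = -r) :
    (RadInv m r ↔
      ∀ (a : A) (f : Module.Dual K A),
        Tten r ((m.flip a).dualMap f) = (m a - m.flip a) (Tten r f)) ∧
    (RadInv m r ↔
      ∀ f g : Module.Dual K A,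
        (m (Tten r f)).dualMap g
          = (m (Tten r g) - m.flip (Tten r g)).dualMap f) :=
  stmt8_general m r hskew

end
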